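/- arXiv:2412.08989 — 2 statements merged into one kernel-verified Lean document; each statement's English description precedes it below -/
import Mathlib

section
/- If U = U₁:…:U₈ is an interleaved double chain of words, then its f₁-lift V, defined by V₁ = U₆⁻¹U₅⁻¹U₄⁻¹, V₅ = U₂⁻¹U₁⁻¹U₈⁻¹, and V_j = U_j for j ∈ {2,3,4,6,7,8}, is again an interleaved double chain. -/
/-!
Relation `i + 4` of a double chain is the reversal of relation `i`, so only relations `0, 1, 2, 3`
need checking. For the lift, relations `2` and `3` involve only unchanged parts, while relations `0`
and `1` of `V`, once the common outer factor is cancelled, are relations `1` and `0` of `U`.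
-/

/-- Letterwise reversal of a word over an alphabet with reversal `inv`. -/
def wrev {A : Type*} (inv : A → A) (W : List A) : List A := (W.map inv).reverse

/-- An interleaved double chain (indices mod 8). -/
def IDC {A : Type*} (inv : A → A) (U : ZMod 8 → List A) : Prop :=
  ∀ i : ZMod 8, U i ++ U (i + 1) = wrev inv (U (i + 4) ++ U (i + 5))

/-- The `f₁`-lift: `V₁ = U₆⁻¹U₅⁻¹U₄⁻¹`, `V₅ = U₂⁻¹U₁⁻¹U₈⁻¹`, other parts unchanged. -/
def f1lift {A : Type*} (inv : A → A) (U : ZMod 8 → List A) : ZMod 8 → List A :=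
  fun j =>
    if j = 1 then wrev inv (U 6) ++ wrev inv (U 5) ++ wrev inv (U 4)
    else if j = 5 then wrev inv (U 2) ++ wrev inv (U 1) ++ wrev inv (U 8)
    else U j

section

variable {A : Type*} {inv : A → A}

theorem wrev_append (V W : List A) :
    wrev inv (V ++ W) = wrev inv W ++ wrev inv V := by
  simp [wrev]

theorem wrev_wrev (hinv : Function.Involutive inv) (W : List A) : wrev inv (wrev inv W) = W := by
  simp [wrev, List.map_reverse, hinv.comp_self]

theorem eq_wrev_iff_eq_wrev (hinv : Function.Involutive inv) {V W : List A} :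
    V = wrev inv W ↔ W = wrev inv V := by
  constructor <;> rintro rfl <;> exact (wrev_wrev hinv _).symm

theorem idc_iff (hinv : Function.Involutive inv) {U : ZMod 8 → List A} :
    IDC inv U ↔ U 0 ++ U 1 = wrev inv (U 4 ++ U 5) ∧ U 1 ++ U 2 = wrev inv (U 5 ++ U 6) ∧
      U 2 ++ U 3 = wrev inv (U 6 ++ U 7) ∧ U 3 ++ U 4 = wrev inv (U 7 ++ U 0) := by
  refine ⟨fun hU => ⟨hU 0, hU 1, hU 2, hU 3⟩, fun ⟨h0, h1, h2, h3⟩ i => ?_⟩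
  fin_cases i
  exacts [h0, h1, h2, h3, (eq_wrev_iff_eq_wrev hinv).1 h0, (eq_wrev_iff_eq_wrev hinv).1 h1,
    (eq_wrev_iff_eq_wrev hinv).1 h2, (eq_wrev_iff_eq_wrev hinv).1 h3]

theorem f1lift_one (U : ZMod 8 → List A) :
    f1lift inv U 1 = wrev inv (U 6) ++ wrev inv (U 5) ++ wrev inv (U 4) := rfl

theorem f1lift_five (U : ZMod 8 → List A) :
    f1lift inv U 5 = wrev inv (U 2) ++ wrev inv (U 1) ++ wrev inv (U 0) := rfl

theorem f1lift_of_ne (U : ZMod 8 → List A) {j : ZMod 8} (h1 : j ≠ 1) (h5 : j ≠ 5) :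
    f1lift inv U j = U j := by
  simp [f1lift, h1, h5]

end

theorem stmt2 {A : Type*} (inv : A → A) (hinv : Function.Involutive inv)
    (U : ZMod 8 → List A) (hU : IDC inv U) :
    IDC inv (f1lift inv U) := by
  obtain ⟨h0, h1, h2, h3⟩ := (idc_iff hinv).1 hU
  rw [wrev_append] at h0 h1
  refine (idc_iff hinv).2 ⟨?_, ?_, ?_, ?_⟩ <;>
    simp (disch := decide) only [f1lift_one, f1lift_five, f1lift_of_ne]
  · rw [← h1]
    simp only [wrev_append, wrev_wrev hinv, List.append_assoc]
  · simp only [wrev_append, wrev_wrev hinv]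
    rw [← List.append_assoc (U 0), h0]
    simp only [List.append_assoc]
  exacts [h2, h3]
end

section
/- Let L = L₁:…:L₈ be an interleaved double chain (a loop) whose type (ℓ₁,ℓ₂,ℓ₃,ℓ₄) satisfies ℓ₁+ℓ₃ = ℓ₂+ℓ₄ and ℓ₁ = max ℓ_i. Then there exist words A, B, C with |A| = ℓ₂−ℓ₃, |B| = ℓ₃, |C| = ℓ₄−ℓ₃ such that L₁ = ABC, L₂ = B⁻¹A, L₃ = B, L₄ = C⁻¹B⁻¹, L₅ = A⁻¹BC⁻¹, L₆ = B⁻¹A⁻¹, L₇ = B, L₈ = CB⁻¹. -/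
/-!
Read the relation at `i` as `Lᵢ Lᵢ₊₁ = Lᵢ₊₅⁻¹ Lᵢ₊₄⁻¹`. Comparing lengths around the cycle forces
`|Lᵢ₊₄| = |Lᵢ|`, so whichever of `Lᵢ`, `Lᵢ₊₁` is longer factors through the shorter word on the
other side. This gives `L₂ = L₇⁻¹ A` and `L₄ = D L₇⁻¹`, and two factorizations
`L₅⁻¹ = X L₇⁻¹ A = D⁻¹ L₃⁻¹ Y`. Since `|X| = ℓ₁ - ℓ₂ = ℓ₄ - ℓ₃ = |D|`, comparing them yields
`X = D⁻¹`, `L₇ = L₃` and `A = Y`. With `B = L₃` and `C = D⁻¹`, all eight words can then be read off.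
-/

theorem List.exists_eq_append_of_append_eq_append {α : Type*} {X Y U V : List α}
    (h : X ++ Y = U ++ V) (hle : U.length ≤ X.length) : ∃ W, X = U ++ W ∧ V = W ++ Y := by
  rcases List.append_eq_append_iff.mp h with ⟨W, rfl, rfl⟩ | ⟨W, hX, hV⟩
  · obtain rfl : W = [] :=
      List.eq_nil_of_length_eq_zero (by rw [List.length_append] at hle; omega)
    exact ⟨[], by simp, by simp⟩
  · exact ⟨W, hX, hV⟩

section Wrev

variable {α : Type*} {inv : α → α}

@[simp]
theorem wrev_append_s14 (X Y : List α) : wrev inv (X ++ Y) = wrev inv Y ++ wrev inv X := by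
  simp [wrev]

@[simp]
theorem length_wrev (X : List α) : (wrev inv X).length = X.length := by
  simp [wrev]

theorem wrev_involutive (hinv : Function.Involutive inv) : Function.Involutive (wrev inv) := by
  intro X
  simp [wrev, List.map_reverse, hinv.comp_self]

end Wrev

namespace IDC

variable {α : Type*} {inv : α → α} {L : ZMod 8 → List α}

theorem length_add_length (hL : IDC inv L) (i : ZMod 8) :
    (L i).length + (L (i + 1)).length = (L (i + 4)).length + (L (i + 5)).length := by
  simpa [add_comm] using congrArg List.length (hL i)

theorem length_add_four (hL : IDC inv L) (i : ZMod 8) : (L (i + 4)).length = (L i).length := by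
  -- `dⱼ = ℓⱼ - ℓⱼ₊₄` alternates in sign along the four relations, so `dᵢ₊₄ = dᵢ`, but also
  -- `dᵢ₊₄ = -dᵢ` since `ℓᵢ₊₈ = ℓᵢ`.
  have h0 := hL.length_add_length i
  have h1 := hL.length_add_length (i + 1)
  have h2 := hL.length_add_length (i + 2)
  have h3 := hL.length_add_length (i + 3)
  have h8 : i + 3 + 5 = i := by ring_nf; reduce_mod_char
  rw [h8] at h3
  ring_nf at h0 h1 h2 h3 ⊢
  omega

theorem length_add_five (hL : IDC inv L) (i : ZMod 8) :
    (L (i + 5)).length = (L (i + 1)).length := by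
  rw [← hL.length_add_four (i + 1), add_assoc]
  norm_num

theorem exists_eq_wrev_append (hL : IDC inv L) {i : ZMod 8}
    (h : (L (i + 1)).length ≤ (L i).length) :
    ∃ X, L i = wrev inv (L (i + 5)) ++ X ∧ wrev inv (L (i + 4)) = X ++ L (i + 1) :=
  List.exists_eq_append_of_append_eq_append (by simpa using hL i)
    (by simpa [hL.length_add_five i] using h)

theorem exists_eq_append_wrev (hL : IDC inv L) {i : ZMod 8}
    (h : (L i).length ≤ (L (i + 1)).length) :
    ∃ Y, L (i + 1) = Y ++ wrev inv (L (i + 4)) ∧ wrev inv (L (i + 5)) = L i ++ Y := by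
  obtain ⟨Y, hi, hi1⟩ := List.exists_eq_append_of_append_eq_append
    (by simpa using (hL i).symm) (by simpa [hL.length_add_five i] using h)
  exact ⟨Y, hi1, hi⟩

end IDC

theorem stmt14_general {A : Type*} (inv : A → A) (hinv : Function.Involutive inv)
    (L : ZMod 8 → List A) (hL : IDC inv L)
    (hloop : (L 1).length + (L 3).length = (L 2).length + (L 4).length)
    (hmax2 : (L 2).length ≤ (L 1).length)
    (hmax4 : (L 4).length ≤ (L 1).length) :
    ∃ Aw Bw Cw : List A,
      Aw.length = (L 2).length - (L 3).length ∧
      Bw.length = (L 3).length ∧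
      Cw.length = (L 4).length - (L 3).length ∧
      L 1 = Aw ++ Bw ++ Cw ∧
      L 2 = wrev inv Bw ++ Aw ∧
      L 3 = Bw ∧
      L 4 = wrev inv Cw ++ wrev inv Bw ∧
      L 5 = wrev inv Aw ++ Bw ++ wrev inv Cw ∧
      L 6 = wrev inv Bw ++ wrev inv Aw ∧
      L 7 = Bw ∧
      L 8 = Cw ++ wrev inv Bw := by
  have hw := wrev_involutive hinv
  have l04 : (L 4).length = (L 0).length := hL.length_add_four 0
  have l15 : (L 5).length = (L 1).length := hL.length_add_four 1
  have l37 : (L 7).length = (L 3).length := hL.length_add_four 3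
  obtain ⟨Aw, hL2, hL6⟩ : ∃ Aw, L 2 = wrev inv (L 7) ++ Aw ∧ wrev inv (L 6) = Aw ++ L 3 :=
    hL.exists_eq_wrev_append (show (L 3).length ≤ (L 2).length by omega)
  obtain ⟨D, hL4, hL0⟩ : ∃ D, L 4 = D ++ wrev inv (L 7) ∧ wrev inv (L 0) = L 3 ++ D :=
    hL.exists_eq_append_wrev (show (L 3).length ≤ (L 4).length by omega)
  obtain ⟨X, hL1, hX5⟩ : ∃ X, L 1 = wrev inv (L 6) ++ X ∧ wrev inv (L 5) = X ++ L 2 :=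
    hL.exists_eq_wrev_append hmax2
  obtain ⟨Y, -, hY5⟩ : ∃ Y, L 1 = Y ++ wrev inv (L 4) ∧ wrev inv (L 5) = L 0 ++ Y :=
    hL.exists_eq_append_wrev (show (L 0).length ≤ (L 1).length by omega)
  rw [hw.eq_iff, wrev_append_s14] at hL0
  have hL5 : X ++ (wrev inv (L 7) ++ Aw) = wrev inv D ++ (wrev inv (L 3) ++ Y) := by
    rw [← hL2, ← hX5, hY5, hL0, List.append_assoc]
  have lX := congrArg List.length hX5
  have lD := congrArg List.length hL4
  simp only [List.length_append, length_wrev] at lX lD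
  obtain ⟨hX, hL5⟩ := List.append_inj hL5 (by simp only [length_wrev]; omega)
  obtain ⟨hL7, rfl⟩ := List.append_inj hL5 (by simp only [length_wrev, l37])
  replace hL7 := hw.injective hL7
  rw [hL7] at hL2 hL4
  refine ⟨Aw, L 3, wrev inv D, by simp [hL2], rfl, by simp [hL4], ?_, hL2, rfl, ?_, ?_, ?_,
    hL7, hL0⟩
  · rw [hL1, hL6, hX, List.append_assoc]
  · rw [hL4, hw D]
  · rw [← hw (L 5), hX5, hX, hL2]
    simp only [wrev_append_s14, hw D, hw (L 3), List.append_assoc]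
  · rw [← hw (L 6), hL6, wrev_append_s14]

theorem stmt14 {A : Type*} (inv : A → A) (hinv : Function.Involutive inv)
    (L : ZMod 8 → List A) (hL : IDC inv L)
    (hloop : (L 1).length + (L 3).length = (L 2).length + (L 4).length)
    (hmax2 : (L 2).length ≤ (L 1).length)
    (hmax3 : (L 3).length ≤ (L 1).length)
    (hmax4 : (L 4).length ≤ (L 1).length) :
    ∃ Aw Bw Cw : List A,
      Aw.length = (L 2).length - (L 3).length ∧
      Bw.length = (L 3).length ∧
      Cw.length = (L 4).length - (L 3).length ∧
      L 1 = Aw ++ Bw ++ Cw ∧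
      L 2 = wrev inv Bw ++ Aw ∧
      L 3 = Bw ∧
      L 4 = wrev inv Cw ++ wrev inv Bw ∧
      L 5 = wrev inv Aw ++ Bw ++ wrev inv Cw ∧
      L 6 = wrev inv Bw ++ wrev inv Aw ∧
      L 7 = Bw ∧
      L 8 = Cw ++ wrev inv Bw :=
  stmt14_general inv hinv L hL hloop hmax2 hmax4
end
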